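/- Let R be a commutative ℚ-algebra, let g ∈ R⟦X⟧ be a formal power series with zero constant term whose coefficient in degree 1 is a unit of R, and let (a_k)_{k≥2} be a family of elements of R. If the identity Σ_{k≥2} 6(k−1)·a_k·g^{2k} = Σ_{k≥2} k(2k−1)·a_k·g^{2k} holds in R⟦X⟧ (both sums converge in the X-adic topology since g^{2k} has order at least 2k), then a_k = 0 for all k ≥ 3. -/

import Mathlib

/-!
Subtracting the two sides leaves `Σ_{k≥2} (2k−3)(k−2)·a_k·g^{2k} = 0`. Since `g^n` starts with
`(coeff 1 g)^n X^n`, a unit multiple of `X^n`, comparing coefficients in increasing degree shows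
that such a sum of distinct powers of `g` vanishes only if all its coefficients do; and
`(2k−3)(k−2)` is invertible in a `ℚ`-algebra for `k ≥ 3`.
-/

open PowerSeries Filter

namespace PowerSeries

variable {R : Type*}

theorem coeff_pow_of_lt [Semiring R] {g : R⟦X⟧} (h0 : constantCoeff g = 0) {m n : ℕ}
    (h : n < m) : coeff n (g ^ m) = 0 :=
  coeff_of_lt_order n <| (Nat.cast_lt.mpr h).trans_le (le_order_pow_of_constantCoeff_eq_zero m h0)

theorem coeff_pow_self [CommSemiring R] {g : R⟦X⟧} (h0 : constantCoeff g = 0) (n : ℕ) :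
    coeff n (g ^ n) = coeff 1 g ^ n := by
  obtain ⟨h, rfl⟩ := X_dvd_iff.mpr h0
  rw [mul_pow, coeff_X_pow_mul', if_pos le_rfl, Nat.sub_self]
  simp [← map_pow]

namespace WithPiTopology

variable [TopologicalSpace R] {ι : Type*} {e : ι → ℕ}

theorem summable_smul_pow [Semiring R] {g : R⟦X⟧} (h0 : constantCoeff g = 0)
    (he : Tendsto e cofinite atTop) (b : ι → R) : Summable fun i ↦ b i • g ^ e i := by
  rw [summable_iff_summable_coeff R]
  intro n
  refine summable_of_hasFiniteSupport <| (eventually_cofinite.mp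
    (he.eventually (eventually_gt_atTop n))).subset fun i hi ↦ ?_
  contrapose! hi
  simp [coeff_pow_of_lt h0 (not_le.mp hi)]

theorem coeff_tsum_smul_pow [Semiring R] [T2Space R] {g : R⟦X⟧} (h0 : constantCoeff g = 0)
    (he : Tendsto e cofinite atTop) (b : ι → R) (n : ℕ) :
    coeff n (∑' i, b i • g ^ e i) = ∑' i, b i * coeff n (g ^ e i) := by
  simpa using ((hasSum_iff_hasSum_coeff R).mp (summable_smul_pow h0 he b).hasSum n).tsum_eq.symm

theorem eq_zero_of_tsum_smul_pow_eq_zero [CommSemiring R] [T2Space R] {g : R⟦X⟧}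
    (h0 : constantCoeff g = 0) (h1 : IsUnit (coeff 1 g)) (he : Function.Injective e)
    {b : ι → R} (hb : ∑' i, b i • g ^ e i = 0) (i : ι) : b i = 0 := by
  have he' : Tendsto e cofinite atTop := Nat.cofinite_eq_atTop ▸ he.tendsto_cofinite
  suffices ∀ n i, e i = n → b i = 0 from this _ i rfl
  intro n
  induction n using Nat.strong_induction_on with
  | _ n ih =>
  rintro i rfl
  have hcoeff := coeff_tsum_smul_pow h0 he' b (e i)
  rw [hb, map_zero, tsum_eq_single i, coeff_pow_self h0] at hcoeff
  · exact (h1.pow _).mul_left_eq_zero.mp hcoeff.symm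
  intro j hj
  rcases lt_or_gt_of_ne (he.ne hj) with hlt | hgt
  · rw [ih _ hlt j rfl, zero_mul]
  · rw [coeff_pow_of_lt h0 hgt, mul_zero]

end WithPiTopology

end PowerSeries

theorem isUnit_natCast_of_ne_zero {R : Type*} [Semiring R] [Algebra ℚ R] {n : ℕ} (hn : n ≠ 0) :
    IsUnit (n : R) :=
  map_natCast (algebraMap ℚ R) n ▸ (isUnit_iff_ne_zero.mpr (Nat.cast_ne_zero.mpr hn)).map _

theorem Nat.mul_two_mul_sub_one_eq {k : ℕ} (hk : 2 ≤ k) :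
    k * (2 * k - 1) = 6 * (k - 1) + (2 * k - 3) * (k - 2) := by
  obtain ⟨m, rfl⟩ := Nat.exists_eq_add_of_le' hk
  rw [show 2 * (m + 2) - 1 = 2 * m + 3 by omega, show 2 * (m + 2) - 3 = 2 * m + 1 by omega,
    Nat.add_sub_cancel, show m + 2 - 1 = m + 1 by omega]
  ring

open PowerSeries.WithPiTopology in
/-- If `g` has zero constant term and unit linear coefficient, and
`Σ_{k≥2} 6(k−1)·a_k·g^{2k} = Σ_{k≥2} k(2k−1)·a_k·g^{2k}` holds in `R⟦X⟧`
(the sums taken in the product topology with `R` discrete, i.e. the `X`-adic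
topology on coefficients), then `a_k = 0` for all `k ≥ 3`. -/
theorem statement14 {R : Type*} [CommRing R] [Algebra ℚ R] (g : PowerSeries R)
    (h0 : PowerSeries.constantCoeff g = 0)
    (h1 : IsUnit (PowerSeries.coeff 1 g))
    (a : ℕ → R)
    (heq :
      letI : TopologicalSpace R := ⊥
      letI : TopologicalSpace (PowerSeries R) := Pi.topologicalSpace
      (∑' k : {k : ℕ // 2 ≤ k}, (((6 * (k.1 - 1) : ℕ) : R) * a k.1) • g ^ (2 * k.1))
        = ∑' k : {k : ℕ // 2 ≤ k}, (((k.1 * (2 * k.1 - 1) : ℕ) : R) * a k.1) • g ^ (2 * k.1)) :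
    ∀ k : ℕ, 3 ≤ k → a k = 0 := by
  let : TopologicalSpace R := ⊥
  have : DiscreteTopology R := ⟨rfl⟩
  have he : Function.Injective fun k : {k : ℕ // 2 ≤ k} ↦ 2 * k.1 :=
    fun i j h ↦ Subtype.ext (by simpa using h)
  have hsum := summable_smul_pow h0 (Nat.cofinite_eq_atTop ▸ he.tendsto_cofinite)
  have hsplit (k : {k : ℕ // 2 ≤ k}) :
      (((k.1 * (2 * k.1 - 1) : ℕ) : R) * a k.1) • g ^ (2 * k.1)
        = (((6 * (k.1 - 1) : ℕ) : R) * a k.1) • g ^ (2 * k.1)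
          + ((((2 * k.1 - 3) * (k.1 - 2) : ℕ) : R) * a k.1) • g ^ (2 * k.1) := by
    rw [← add_smul, ← add_mul, ← Nat.cast_add, ← Nat.mul_two_mul_sub_one_eq k.2]
  have hzero : ∑' k : {k : ℕ // 2 ≤ k},
      ((((2 * k.1 - 3) * (k.1 - 2) : ℕ) : R) * a k.1) • g ^ (2 * k.1) = 0 := by
    rw [← left_eq_add, ← (hsum _).tsum_add (hsum _), ← tsum_congr hsplit]
    exact heq
  intro k hk
  have hk' : (((2 * k - 3) * (k - 2) : ℕ) : R) * a k = 0 :=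
    eq_zero_of_tsum_smul_pow_eq_zero h0 h1 he hzero ⟨k, by omega⟩
  exact (isUnit_natCast_of_ne_zero (Nat.mul_ne_zero (by omega) (by omega))).mul_right_eq_zero.mp hk'
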